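/- arXiv:2602.04155 — 6 statements merged into one kernel-verified Lean document; each statement's English description precedes it below -/
import Mathlib

section
/- Let Θ be a convex subset of a real vector space, μ_1, …, μ_m probability measures on a measurable space Z, and ℓ : Θ × Z → ℝ such that for each z the map θ ↦ ℓ(θ, z) is convex, z ↦ ℓ(θ, z) is measurable and μ_g-integrable for every θ and g, and define R_g(θ) = ∫ ℓ(θ, z) dμ_g(z) and the risk set R(Θ) = {(R_1(θ), …, R_m(θ)) : θ ∈ Θ}. Then no point of conv(R(Θ)) \ R(Θ) is Pareto optimal in conv(R(Θ)) for minimization; that is, every point of the convex hull of the risk set that does not lie in the risk set is Pareto dominated by a point of the risk set. -/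
/-!
Integrating the convex loss makes every coordinate of the risk map `θ ↦ R(θ)` convex, so the
upper closure of `R(Θ)` is convex. It contains `R(Θ)`, hence `conv R(Θ)`: every point of the hull
lies above some `R(θ)`, and strictly so in some coordinate when it is not itself in `R(Θ)`.
-/

open MeasureTheory Set

section Convex

variable {𝕜 E ι : Type*} [Semiring 𝕜] [PartialOrder 𝕜] [AddCommMonoid E] [SMul 𝕜 E]
  {s : Set E}

theorem ConvexOn.pi {β : ι → Type*} [∀ i, AddCommMonoid (β i)] [∀ i, PartialOrder (β i)]
    [∀ i, SMul 𝕜 (β i)] {F : E → ∀ i, β i} (hs : Convex 𝕜 s)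
    (hF : ∀ i, ConvexOn 𝕜 s fun x => F x i) : ConvexOn 𝕜 s F :=
  ⟨hs, fun _ hx _ hy _ _ ha hb hab i => (hF i).2 hx hy ha hb hab⟩

variable {β : Type*} [AddCommMonoid β] [PartialOrder β] [IsOrderedAddMonoid β] [Module 𝕜 β]
  [PosSMulMono 𝕜 β] {F : E → β}

theorem ConvexOn.convex_upperClosure_image (hF : ConvexOn 𝕜 s F) :
    Convex 𝕜 (upperClosure (F '' s) : Set β) := by
  rintro _ ⟨_, ⟨x, hx, rfl⟩, hxr⟩ _ ⟨_, ⟨y, hy, rfl⟩, hyt⟩ a b ha hb hab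
  refine ⟨F (a • x + b • y), mem_image_of_mem F (hF.1 hx hy ha hb hab), ?_⟩
  calc F (a • x + b • y) ≤ a • F x + b • F y := hF.2 hx hy ha hb hab
    _ ≤ _ := by gcongr

theorem ConvexOn.exists_le_of_mem_convexHull_image (hF : ConvexOn 𝕜 s F) {r : β}
    (hr : r ∈ convexHull 𝕜 (F '' s)) : ∃ x ∈ s, F x ≤ r := by
  obtain ⟨_, ⟨x, hx, rfl⟩, hxr⟩ :=
    convexHull_min subset_upperClosure hF.convex_upperClosure_image hr
  exact ⟨x, hx, hxr⟩

end Convex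

theorem convex_hull_no_pareto_general
    {V : Type*} [AddCommGroup V] [Module ℝ V]
    (Θ : Set V) (hΘ : Convex ℝ Θ)
    {Z : Type*} [MeasurableSpace Z]
    (m : ℕ) (μ : Fin m → Measure Z)
    (ℓ : V → Z → ℝ)
    (hconv : ∀ z, ConvexOn ℝ Θ fun θ => ℓ θ z)
    (hint : ∀ θ ∈ Θ, ∀ g, Integrable (ℓ θ) (μ g))
    (RS : Set (Fin m → ℝ))
    (hRS : RS = (fun θ => fun g => ∫ z, ℓ θ z ∂(μ g)) '' Θ)
    (r : Fin m → ℝ) (hr : r ∈ convexHull ℝ RS) (hrn : r ∉ RS) :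
    ∃ r' ∈ RS, (∀ g, r' g ≤ r g) ∧ ∃ g, r' g < r g := by
  set risk : V → Fin m → ℝ := fun θ g => ∫ z, ℓ θ z ∂(μ g)
  have hrisk : ConvexOn ℝ Θ risk := ConvexOn.pi hΘ fun g =>
    integral_convexOn_of_integrand_ae hΘ (ae_of_all _ hconv) fun θ hθ => hint θ hθ g
  subst hRS
  obtain ⟨θ, hθ, hle⟩ := hrisk.exists_le_of_mem_convexHull_image hr
  have hne : risk θ ≠ r := fun h => hrn (h ▸ mem_image_of_mem risk hθ)
  exact ⟨risk θ, mem_image_of_mem risk hθ, Pi.lt_def.1 (hle.lt_of_ne hne)⟩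

/-- With convex-in-θ losses on a convex parameter set, every point of the
convex hull of the risk set that is not in the risk set is Pareto dominated (for
minimization) by a point of the risk set. -/
theorem convex_hull_no_pareto
    {V : Type*} [AddCommGroup V] [Module ℝ V]
    (Θ : Set V) (hΘ : Convex ℝ Θ)
    {Z : Type*} [MeasurableSpace Z]
    (m : ℕ) (μ : Fin m → Measure Z) (hprob : ∀ g, IsProbabilityMeasure (μ g))
    (ℓ : V → Z → ℝ)
    (hconv : ∀ z, ConvexOn ℝ Θ fun θ => ℓ θ z)
    (hmeas : ∀ θ, Measurable (ℓ θ))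
    (hint : ∀ θ ∈ Θ, ∀ g, Integrable (ℓ θ) (μ g))
    (RS : Set (Fin m → ℝ))
    (hRS : RS = (fun θ => fun g => ∫ z, ℓ θ z ∂(μ g)) '' Θ)
    (r : Fin m → ℝ) (hr : r ∈ convexHull ℝ RS) (hrn : r ∉ RS) :
    ∃ r' ∈ RS, (∀ g, r' g ≤ r g) ∧ ∃ g, r' g < r g :=
  convex_hull_no_pareto_general Θ hΘ m μ ℓ hconv hint RS hRS r hr hrn
end

section
/- Let Θ be a convex subset of a real vector space and R_1, …, R_m : Θ → ℝ strictly convex functions with risk set R(Θ) = {(R_1(θ), …, R_m(θ)) : θ ∈ Θ}. Then no point of conv(R(Θ)) \ R(Θ) is weakly Pareto optimal in conv(R(Θ)): every point of the convex hull of the risk set that does not lie in the risk set is strictly dominated in every coordinate by some point of the risk set. -/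
/-!
Let `F θ = (R₁ θ, …, Rₘ θ)`. The risk set `F '' Θ` together with all points strictly dominated
by one of its elements is convex: a proper convex combination of `F θ₁ ≤ r₁` and
`F θ₂ ≤ r₂` is strictly dominated by `F` at the combined parameter, by strict convexity when
`θ₁ ≠ θ₂` and by the strict domination of `r₁` or `r₂` otherwise, the only exception being
`θ₁ = θ₂` with `r₁ = r₂ = F θ₁`, where the combination is `F θ₁` itself. Hence this union
contains the convex hull of the risk set.
-/

open Function Set

section

variable {𝕜 E ι : Type*} [Field 𝕜] [LinearOrder 𝕜] [IsStrictOrderedRing 𝕜]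
  [AddCommGroup E] [Module 𝕜 E]

theorem StrictConvexOn.map_add_lt_of_le_of_le {s : Set E} {f : E → 𝕜} {x y : E} {a b u v : 𝕜}
    (hf : StrictConvexOn 𝕜 s f) (hx : x ∈ s) (hy : y ∈ s) (ha : 0 < a) (hb : 0 < b)
    (hab : a + b = 1) (hu : f x ≤ u) (hv : f y ≤ v) (hstrict : x ≠ y ∨ f x < u ∨ f y < v) :
    f (a • x + b • y) < a * u + b * v := by
  rcases eq_or_ne x y with rfl | hxy
  · rw [Convex.combo_self hab]
    have hsplit : f x = a * f x + b * f x := by rw [← add_mul, hab, one_mul]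
    rcases hstrict.resolve_left (not_not.2 rfl) with h | h
    · nlinarith [mul_lt_mul_of_pos_left h ha, mul_le_mul_of_nonneg_left hv hb.le]
    · nlinarith [mul_le_mul_of_nonneg_left hu ha.le, mul_lt_mul_of_pos_left h hb]
  · calc f (a • x + b • y) < a • f x + b • f y := hf.2 hx hy hxy ha hb hab
      _ ≤ a * u + b * v := by simp only [smul_eq_mul]; gcongr

theorem convex_image_union_setOf_strictlyDominated {s : Set E} {F : ι → E → 𝕜}
    (hs : Convex 𝕜 s) (hF : ∀ i, StrictConvexOn 𝕜 s (F i)) :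
    Convex 𝕜 (swap F '' s ∪ {r | ∃ x ∈ s, ∀ i, F i x < r i}) := by
  refine convex_iff_forall_pos.2 ?_
  rintro _ (⟨x, hx, rfl⟩ | ⟨x, hx, hxr⟩) _ (⟨y, hy, rfl⟩ | ⟨y, hy, hyr⟩) a b ha hb hab
  · rcases eq_or_ne x y with rfl | hxy
    · exact Or.inl ⟨x, hx, (Convex.combo_self hab _).symm⟩
    refine Or.inr ⟨a • x + b • y, hs hx hy ha.le hb.le hab, fun i => ?_⟩
    exact (hF i).map_add_lt_of_le_of_le hx hy ha hb hab le_rfl le_rfl (Or.inl hxy)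
  all_goals
    refine Or.inr ⟨a • x + b • y, hs hx hy ha.le hb.le hab, fun i => ?_⟩
  · exact (hF i).map_add_lt_of_le_of_le hx hy ha hb hab le_rfl (hyr i).le
      (Or.inr (Or.inr (hyr i)))
  · exact (hF i).map_add_lt_of_le_of_le hx hy ha hb hab (hxr i).le le_rfl
      (Or.inr (Or.inl (hxr i)))
  · exact (hF i).map_add_lt_of_le_of_le hx hy ha hb hab (hxr i).le (hyr i).le
      (Or.inr (Or.inl (hxr i)))

end

/-- With strictly convex risk functions on a convex set Θ, every point of
the convex hull of the risk set that is not in the risk set is strictly dominated in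
every coordinate by a point of the risk set (hence is not weakly Pareto optimal). -/
theorem convex_hull_no_weak_pareto
    {V : Type*} [AddCommGroup V] [Module ℝ V]
    (Θ : Set V) (hΘ : Convex ℝ Θ)
    (m : ℕ) (R : Fin m → V → ℝ)
    (hsc : ∀ g, StrictConvexOn ℝ Θ (R g))
    (RS : Set (Fin m → ℝ))
    (hRS : RS = (fun θ => fun g => R g θ) '' Θ)
    (r : Fin m → ℝ) (hr : r ∈ convexHull ℝ RS) (hrn : r ∉ RS) :
    ∃ r' ∈ RS, ∀ g, r' g < r g := by
  subst hRS
  have hr :=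
    convexHull_min subset_union_left (convex_image_union_setOf_strictlyDominated hΘ hsc) hr
  obtain ⟨θ, hθ, hdom⟩ := hr.resolve_left hrn
  exact ⟨_, mem_image_of_mem _ hθ, hdom⟩
end

section
/- Let Ω be a nonempty compact convex subset of ℝ² with projection [a, b] onto the first coordinate, let φ(x) = max{y : (x, y) ∈ Ω}, let M = max_{x ∈ [a,b]} φ(x), and let c = max{x ∈ [a, b] : φ(x) = M}. Then for every x ∈ [c, b], the point (x, φ(x)) is Pareto optimal in Ω for maximization. -/
/-!
The upper boundary `φ` of a convex set is concave. A concave function on an interval is strictly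
decreasing to the right of its largest maximizer `c`, since every secant there has negative slope.
So for `c ≤ x < x'` no point of `Ω` above `x'` reaches height `φ x`, while above `x` itself
nothing lies higher than `φ x`.
-/

open Set

theorem concaveOn_of_isGreatest_fiber {E : Type*} [AddCommGroup E] [Module ℝ E]
    {Ω : Set (E × ℝ)} (hΩ : Convex ℝ Ω) {s : Set E} (hs : Convex ℝ s) {φ : E → ℝ}
    (hφ : ∀ x ∈ s, IsGreatest {y | (x, y) ∈ Ω} (φ x)) : ConcaveOn ℝ s φ := by
  refine ⟨hs, fun x hx x' hx' t t' ht ht' htt' => (hφ _ (hs hx hx' ht ht' htt')).2 ?_⟩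
  simpa using hΩ (hφ x hx).1 (hφ x' hx').1 ht ht' htt'

theorem ConcaveOn.strictAntiOn_inter_Ici {s : Set ℝ} {f : ℝ → ℝ} (hf : ConcaveOn ℝ s f)
    {c : ℝ} (hc : c ∈ s) (hlt : ∀ y ∈ s, c < y → f y < f c) : StrictAntiOn f (s ∩ Ici c) := by
  rintro x ⟨hx, hcx : c ≤ x⟩ y ⟨hy, -⟩ hxy
  rcases hcx.eq_or_lt with rfl | hcx
  · exact hlt y hy hxy
  · have hslope : (f y - f x) / (y - x) ≤ (f x - f c) / (x - c) :=
      hf.slope_anti_adjacent hc hy hcx hxy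
    have hneg : (f x - f c) / (x - c) < 0 :=
      div_neg_of_neg_of_pos (by linarith [hlt x hx hcx]) (by linarith)
    have := (div_lt_iff₀ (sub_pos.2 hxy)).mp (hslope.trans_lt hneg)
    linarith

theorem upper_boundary_pareto_general
    (Ω : Set (ℝ × ℝ)) (hconv : Convex ℝ Ω)
    (a b : ℝ) (hproj : Prod.fst '' Ω = Set.Icc a b)
    (φ : ℝ → ℝ)
    (hφ : ∀ x ∈ Set.Icc a b, IsGreatest {y | (x, y) ∈ Ω} (φ x))
    (M : ℝ) (hM : IsGreatest (φ '' Set.Icc a b) M)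
    (c : ℝ) (hc : IsGreatest {x ∈ Set.Icc a b | φ x = M} c)
    (x : ℝ) (hx : x ∈ Set.Icc c b) :
    (x, φ x) ∈ Ω ∧ ¬ ∃ p ∈ Ω, x ≤ p.1 ∧ φ x ≤ p.2 ∧ (x < p.1 ∨ φ x < p.2) := by
  obtain ⟨⟨hcab, hφc⟩, hc_max⟩ := hc
  have hxab : x ∈ Icc a b := ⟨hcab.1.trans hx.1, hx.2⟩
  have hlast : ∀ y ∈ Icc a b, c < y → φ y < φ c := fun y hy hcy =>
    hφc ▸ (hM.2 (mem_image_of_mem φ hy)).lt_of_ne fun hyM => hcy.not_ge (hc_max ⟨hy, hyM⟩)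
  have hanti : StrictAntiOn φ (Icc a b ∩ Ici c) :=
    (concaveOn_of_isGreatest_fiber hconv (convex_Icc a b) hφ).strictAntiOn_inter_Ici hcab hlast
  refine ⟨(hφ x hxab).1, ?_⟩
  rintro ⟨p, hp, hxp, hyp, hstrict⟩
  have hp1 : p.1 ∈ Icc a b := hproj ▸ mem_image_of_mem Prod.fst hp
  have hp2 : p.2 ≤ φ p.1 := (hφ p.1 hp1).2 hp
  rcases hxp.eq_or_lt with heq | hlt
  · subst heq
    rcases hstrict with h | h <;> linarith
  · linarith [hanti ⟨hxab, hx.1⟩ ⟨hp1, hx.1.trans hlt.le⟩ hlt]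

/-- For a nonempty compact convex Ω ⊆ ℝ² with projection [a,b] and upper
boundary φ, if M is the maximum of φ on [a,b] and c is the largest maximizer, then for
every x ∈ [c, b] the point (x, φ(x)) is Pareto optimal in Ω for maximization. -/
theorem upper_boundary_pareto
    (Ω : Set (ℝ × ℝ)) (hne : Ω.Nonempty) (hcomp : IsCompact Ω) (hconv : Convex ℝ Ω)
    (a b : ℝ) (hproj : Prod.fst '' Ω = Set.Icc a b)
    (φ : ℝ → ℝ)
    (hφ : ∀ x ∈ Set.Icc a b, IsGreatest {y | (x, y) ∈ Ω} (φ x))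
    (M : ℝ) (hM : IsGreatest (φ '' Set.Icc a b) M)
    (c : ℝ) (hc : IsGreatest {x ∈ Set.Icc a b | φ x = M} c)
    (x : ℝ) (hx : x ∈ Set.Icc c b) :
    (x, φ x) ∈ Ω ∧ ¬ ∃ p ∈ Ω, x ≤ p.1 ∧ φ x ≤ p.2 ∧ (x < p.1 ∨ φ x < p.2) :=
  upper_boundary_pareto_general Ω hconv a b hproj φ hφ M hM c hc x hx
end

section
/- Let Ω be a nonempty compact convex subset of ℝ² with Ω ⊆ {(x, y) : x ≤ 1 and y ≤ 1}, and suppose there exist c, c' < 1 with (1, c) ∈ Ω and (c', 1) ∈ Ω. Then there exists a unique ρ* ∈ ℝ such that (ρ*, ρ*) ∈ Ω and (ρ*, ρ*) is Pareto optimal in Ω for maximization; moreover ρ* = max_{(x,y) ∈ Ω} min(x, y), i.e., the equal-coordinate Pareto optimal point is exactly the maximin point of Ω. -/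
/-!
Along the segment from any point of `Ω` to one of the anchors `(1, c)`, `(c', 1)`, the smaller
coordinate catches up with the larger one, so every `p ∈ Ω` is dominated in `min p.1 p.2` by a
diagonal point of `Ω`, strictly so when `p` is off the diagonal. Hence the largest `ρ` with
`(ρ, ρ) ∈ Ω`, which exists by compactness, is the maximin value; a point dominating `(ρ, ρ)`
would have minimum `ρ` while lying off the diagonal, and any smaller diagonal point is dominated
by `(ρ, ρ)`.
-/

open Set

def IsParetoMax (Ω : Set (ℝ × ℝ)) (p : ℝ × ℝ) : Prop :=
  p ∈ Ω ∧ ¬ ∃ q ∈ Ω, p.1 ≤ q.1 ∧ p.2 ≤ q.2 ∧ (p.1 < q.1 ∨ p.2 < q.2)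

theorem Convex.exists_diag_mem_of_le_of_lt {S : Set (ℝ × ℝ)} (hS : Convex ℝ S) {a b q r : ℝ}
    (hab : (a, b) ∈ S) (hqr : (q, r) ∈ S) (hba : b ≤ a) (hq : q < r) (hbr : b ≤ r) :
    ∃ t, (t, t) ∈ S ∧ b ≤ t ∧ (b < a → b < r → b < t) := by
  -- the weight at which the segment from `(a, b)` to `(q, r)` crosses the diagonal
  set s := (a - b) / (a - b + (r - q)) with hs
  have hden : 0 < a - b + (r - q) := by linarith
  have hs0 : 0 ≤ s := div_nonneg (by linarith) hden.le
  have hs1 : s ≤ 1 := (div_le_one hden).2 (by linarith)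
  have hcross : (1 - s) * a + s * q = (1 - s) * b + s * r := by
    rw [hs]; field_simp; ring
  refine ⟨(1 - s) * b + s * r, ?_, by nlinarith, fun hlt hltr => ?_⟩
  · have hmem := hS hab hqr (sub_nonneg.2 hs1) hs0 (sub_add_cancel 1 s)
    simp only [Prod.smul_mk, smul_eq_mul, Prod.mk_add_mk, hcross] at hmem
    exact hmem
  · have hspos : 0 < s := div_pos (by linarith) hden
    nlinarith

section Anchored

variable {Ω : Set (ℝ × ℝ)} {c c' : ℝ}

theorem exists_diag_mem_min_le (hconv : Convex ℝ Ω) (hub : ∀ p ∈ Ω, p.1 ≤ 1 ∧ p.2 ≤ 1)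
    (hc : c < 1) (hc' : c' < 1) (h1 : (1, c) ∈ Ω) (h2 : (c', 1) ∈ Ω) {p : ℝ × ℝ} (hp : p ∈ Ω) :
    ∃ t, (t, t) ∈ Ω ∧ min p.1 p.2 ≤ t ∧ (p.1 ≠ p.2 → min p.1 p.2 < t) := by
  wlog hle : p.2 ≤ p.1 generalizing Ω c c' p
  · have hswap : Convex ℝ (Prod.swap ⁻¹' Ω) :=
      hconv.linear_preimage (LinearEquiv.prodComm ℝ ℝ ℝ).toLinearMap
    obtain ⟨t, ht, hmin, hlt⟩ := this hswap (fun p hp => (hub _ hp).symm) hc' hc h2 h1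
      (p := p.swap) hp (by simp only [Prod.snd_swap, Prod.fst_swap]; linarith)
    simp only [Prod.fst_swap, Prod.snd_swap, min_comm p.2, ne_comm (a := p.2)] at hmin hlt
    exact ⟨t, ht, hmin, hlt⟩
  obtain ⟨t, ht, hbt, hlt⟩ :=
    hconv.exists_diag_mem_of_le_of_lt hp h2 hle hc' (hub p hp).2
  rw [min_eq_right hle]
  exact ⟨t, ht, hbt, fun hne => hlt (lt_of_le_of_ne hle hne.symm)
    ((lt_of_le_of_ne hle hne.symm).trans_le (hub p hp).1)⟩

end Anchored

theorem IsCompact.exists_isGreatest_diag {Ω : Set (ℝ × ℝ)} (hcomp : IsCompact Ω)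
    (hne : ∃ t, (t, t) ∈ Ω) : ∃ ρ, IsGreatest {t | (t, t) ∈ Ω} ρ := by
  have hclosed : IsClosed {t : ℝ | (t, t) ∈ Ω} :=
    hcomp.isClosed.preimage (continuous_id.prodMk continuous_id)
  obtain ⟨u, hu⟩ := (hcomp.image continuous_fst).bddAbove
  exact ⟨_, hclosed.isGreatest_csSup hne ⟨u, fun t ht => hu ⟨_, ht, rfl⟩⟩⟩

section DiagonalMax

variable {Ω : Set (ℝ × ℝ)} {ρ : ℝ} (hρ : IsGreatest {t | (t, t) ∈ Ω} ρ)
include hρ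

theorem IsGreatest.eq_of_isParetoMax_diag {r : ℝ} (hr : IsParetoMax Ω (r, r)) : r = ρ := by
  refine (hρ.2 hr.1).antisymm (not_lt.1 fun hlt => hr.2 ⟨(ρ, ρ), hρ.1, ?_⟩)
  exact ⟨hlt.le, hlt.le, Or.inl hlt⟩

variable (hdiag : ∀ p ∈ Ω, ∃ t, (t, t) ∈ Ω ∧ min p.1 p.2 ≤ t ∧ (p.1 ≠ p.2 → min p.1 p.2 < t))
include hdiag

theorem IsGreatest.isGreatest_image_min : IsGreatest ((fun p : ℝ × ℝ => min p.1 p.2) '' Ω) ρ := by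
  refine ⟨⟨(ρ, ρ), hρ.1, min_self ρ⟩, ?_⟩
  rintro _ ⟨p, hp, rfl⟩
  obtain ⟨t, ht, hmin, -⟩ := hdiag p hp
  exact hmin.trans (hρ.2 ht)

theorem IsGreatest.isParetoMax_diag : IsParetoMax Ω (ρ, ρ) := by
  refine ⟨hρ.1, fun ⟨p, hp, hp1, hp2, hlt⟩ => ?_⟩
  have hmin : min p.1 p.2 = ρ :=
    ((hρ.isGreatest_image_min hdiag).2 ⟨p, hp, rfl⟩).antisymm (le_min hp1 hp2)
  have hoff : p.1 ≠ p.2 := by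
    rintro heq
    rw [← heq, min_self] at hmin
    rcases hlt with h | h <;> linarith
  obtain ⟨t, ht, -, hgt⟩ := hdiag p hp
  exact (hρ.2 ht).not_gt (hmin ▸ hgt hoff)

end DiagonalMax

theorem ks_two_player_general
    (Ω : Set (ℝ × ℝ)) (hcomp : IsCompact Ω) (hconv : Convex ℝ Ω)
    (hub : ∀ p ∈ Ω, p.1 ≤ 1 ∧ p.2 ≤ 1)
    (c c' : ℝ) (hc : c < 1) (hc' : c' < 1)
    (h1 : (1, c) ∈ Ω) (h2 : (c', 1) ∈ Ω) :
    ∃ ρ : ℝ,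
      ((ρ, ρ) ∈ Ω ∧ ¬ ∃ p ∈ Ω, ρ ≤ p.1 ∧ ρ ≤ p.2 ∧ (ρ < p.1 ∨ ρ < p.2)) ∧
      (∀ ρ' : ℝ,
        ((ρ', ρ') ∈ Ω ∧ ¬ ∃ p ∈ Ω, ρ' ≤ p.1 ∧ ρ' ≤ p.2 ∧ (ρ' < p.1 ∨ ρ' < p.2)) →
        ρ' = ρ) ∧
      IsGreatest ((fun p : ℝ × ℝ => min p.1 p.2) '' Ω) ρ := by
  have hdiag := fun p (hp : p ∈ Ω) => exists_diag_mem_min_le hconv hub hc hc' h1 h2 hp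
  obtain ⟨t, ht, -⟩ := hdiag _ h1
  obtain ⟨ρ, hρ⟩ := hcomp.exists_isGreatest_diag ⟨t, ht⟩
  exact ⟨ρ, hρ.isParetoMax_diag hdiag, fun ρ' h' => hρ.eq_of_isParetoMax_diag h',
    hρ.isGreatest_image_min hdiag⟩

/-- Two-group Kalai–Smorodinsky in relative improvement space. For a
nonempty compact convex Ω ⊆ ℝ² bounded above by (1,1) and containing points (1, c) and
(c', 1) with c, c' < 1, there is a unique ρ* with (ρ*, ρ*) ∈ Ω Pareto optimal for
maximization; moreover ρ* is the maximum over Ω of min(x, y). -/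
theorem ks_two_player
    (Ω : Set (ℝ × ℝ)) (hne : Ω.Nonempty) (hcomp : IsCompact Ω) (hconv : Convex ℝ Ω)
    (hub : ∀ p ∈ Ω, p.1 ≤ 1 ∧ p.2 ≤ 1)
    (c c' : ℝ) (hc : c < 1) (hc' : c' < 1)
    (h1 : (1, c) ∈ Ω) (h2 : (c', 1) ∈ Ω) :
    ∃ ρ : ℝ,
      ((ρ, ρ) ∈ Ω ∧ ¬ ∃ p ∈ Ω, ρ ≤ p.1 ∧ ρ ≤ p.2 ∧ (ρ < p.1 ∨ ρ < p.2)) ∧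
      (∀ ρ' : ℝ,
        ((ρ', ρ') ∈ Ω ∧ ¬ ∃ p ∈ Ω, ρ' ≤ p.1 ∧ ρ' ≤ p.2 ∧ (ρ' < p.1 ∨ ρ' < p.2)) →
        ρ' = ρ) ∧
      IsGreatest ((fun p : ℝ × ℝ => min p.1 p.2) '' Ω) ρ :=
  ks_two_player_general Ω hcomp hconv hub c c' hc hc' h1 h2
end

section
/- Let G be a nonempty finite index set, F a set, and R_g : F → ℝ for each g ∈ G. Let f₀ ∈ F and, for each g, let f_g* ∈ F satisfy R_g(f_g*) ≤ R_g(f) for all f ∈ F and R_g(f₀) > R_g(f_g*). Define the relative improvement ρ_g(f) = (R_g(f₀) − R_g(f)) / (R_g(f₀) − R_g(f_g*)). If f_RI ∈ F satisfies min_{g ∈ G} ρ_g(f_RI) ≥ min_{g ∈ G} ρ_g(f) for all f ∈ F, then R_g(f_RI) ≤ R_g(f₀) for every g ∈ G. -/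
theorem Finset.le_apply_of_inf'_le_inf' {ι β : Type*} [SemilatticeInf β] {s : Finset ι}
    (hs : s.Nonempty) {u v : ι → β} {c : β} (hu : ∀ i ∈ s, c ≤ u i)
    (huv : s.inf' hs u ≤ s.inf' hs v) {i : ι} (hi : i ∈ s) : c ≤ v i :=
  ((Finset.le_inf' hs u hu).trans huv).trans (Finset.inf'_le v hi)

theorem le_of_div_sub_nonneg {a b c : ℝ} (hc : c < a) (h : 0 ≤ (a - b) / (a - c)) : b ≤ a :=
  sub_nonneg.1 <| by simpa using (le_div_iff₀ (sub_pos.2 hc)).1 h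

theorem no_harm_general
    {G : Type*} [Fintype G] [Nonempty G] {F : Type*}
    (R : G → F → ℝ) (f0 : F) (fstar : G → F)
    (hgap : ∀ g, R g (fstar g) < R g f0)
    (ρ : G → F → ℝ)
    (hρ : ∀ g f, ρ g f = (R g f0 - R g f) / (R g f0 - R g (fstar g)))
    (fRI : F)
    (hRI : ∀ f, Finset.univ.inf' Finset.univ_nonempty (fun g => ρ g f) ≤
        Finset.univ.inf' Finset.univ_nonempty (fun g => ρ g fRI)) :
    ∀ g, R g fRI ≤ R g f0 := by
  intro g
  have hbase : ∀ g ∈ Finset.univ, 0 ≤ ρ g f0 := fun g _ => by simp [hρ]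
  have hRIg : 0 ≤ ρ g fRI :=
    Finset.le_apply_of_inf'_le_inf' _ hbase (hRI f0) (Finset.mem_univ g)
  rw [hρ] at hRIg
  exact le_of_div_sub_nonneg (hgap g) hRIg

/-- No-harm guarantee. Any maximizer of the worst-group relative
improvement performs at least as well as the baseline f₀ for every group. -/
theorem no_harm
    {G : Type*} [Fintype G] [Nonempty G] {F : Type*}
    (R : G → F → ℝ) (f0 : F) (fstar : G → F)
    (hopt : ∀ g f, R g (fstar g) ≤ R g f)
    (hgap : ∀ g, R g (fstar g) < R g f0)
    (ρ : G → F → ℝ)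
    (hρ : ∀ g f, ρ g f = (R g f0 - R g f) / (R g f0 - R g (fstar g)))
    (fRI : F)
    (hRI : ∀ f, Finset.univ.inf' Finset.univ_nonempty (fun g => ρ g f) ≤
        Finset.univ.inf' Finset.univ_nonempty (fun g => ρ g fRI)) :
    ∀ g, R g fRI ≤ R g f0 :=
  no_harm_general R f0 fstar hgap ρ hρ fRI hRI
end

section
/- Let G be a nonempty finite index set, F a set, and R_g, R̂_g : F → ℝ for each g ∈ G. Let f₀ ∈ F; for each g let f_g* ∈ F minimize R_g over F and f̂_g* ∈ F minimize R̂_g over F; define ρ_g(f) = (R_g(f₀) − R_g(f)) / (R_g(f₀) − R_g(f_g*)) and ρ̂_g(f) = (R̂_g(f₀) − R̂_g(f)) / (R̂_g(f₀) − R̂_g(f̂_g*)). Let f_RI maximize min_{g} ρ_g over F and f̂_RI maximize min_{g} ρ̂_g over F. Set Δ = min_{g ∈ G} (R_g(f₀) − R_g(f_g*)) and suppose Δ > 0, and suppose ε ≥ 0 satisfies ε ≤ Δ/8 and sup_{f ∈ F} |R̂_g(f) − R_g(f)| ≤ ε for every g ∈ G. Then min_{g ∈ G} ρ_g(f̂_RI)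 ≥ min_{g ∈ G} ρ_g(f_RI) − 12ε/Δ. -/
/-!
A uniform deviation `ε` of the risks moves every improvement `r f₀ - r f`, and also the optimal
improvement `r f₀ - r x` (compare each minimizer with the other's), by at most `2ε`. Since the
relative improvements of both maximin solutions lie in `[0, 1]` (the baseline scores `0`), each
ratio moves by at most `4ε` over its denominator, which is at least `Δ` for the population risks
and at least `Δ / 2` for the empirical ones. Hence
`min ρ(f_RI) - 8ε/Δ ≤ min ρ̂(f_RI) ≤ min ρ̂(f̂_RI) ≤ min ρ(f̂_RI) + 4ε/Δ`.
-/

open Finset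

lemma div_sub_two_mul_div_le_div {a b a' b' δ : ℝ} (hq : 0 ≤ a / b) (hab : a ≤ b) (hb : 0 < b)
    (hb' : 0 < b') (ha' : |a' - a| ≤ δ) (hb'b : |b' - b| ≤ δ) :
    a / b - 2 * δ / b' ≤ a' / b' := by
  have hq1 : a / b ≤ 1 := div_le_one_of_le₀ hab hb.le
  have hqb : a / b * b = a := div_mul_cancel₀ a hb.ne'
  have hδ : 0 ≤ δ := (abs_nonneg _).trans ha'
  rw [sub_le_iff_le_add, ← add_div, le_div_iff₀ hb']
  calc a / b * b' ≤ a / b * (b + δ) := by gcongr; linarith [le_abs_self (b' - b)]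
    _ = a + a / b * δ := by rw [mul_add, hqb]
    _ ≤ a + δ := by gcongr; exact mul_le_of_le_one_left hδ hq1
    _ ≤ a' + 2 * δ := by linarith [neg_abs_le (a' - a)]

section Risk

variable {F : Type*} {r r' : F → ℝ} {ε : ℝ}

lemma abs_sub_sub_sub_le_two_mul (hdev : ∀ f, |r' f - r f| ≤ ε) (x y : F) :
    |(r' x - r' y) - (r x - r y)| ≤ 2 * ε :=
  calc |(r' x - r' y) - (r x - r y)| = |(r' x - r x) - (r' y - r y)| := by ring_nf
    _ ≤ |r' x - r x| + |r' y - r y| := abs_sub _ _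
    _ ≤ 2 * ε := by linarith [hdev x, hdev y]

lemma abs_sub_min_sub_sub_min_le_two_mul (hdev : ∀ f, |r' f - r f| ≤ ε) {x x' : F}
    (hx : ∀ f, r x ≤ r f) (hx' : ∀ f, r' x' ≤ r' f) (f₀ : F) :
    |(r' f₀ - r' x') - (r f₀ - r x)| ≤ 2 * ε := by
  obtain ⟨h₀, h₀'⟩ := abs_le.mp (hdev f₀)
  obtain ⟨-, h₁'⟩ := abs_le.mp (hdev x)
  obtain ⟨h₂, -⟩ := abs_le.mp (hdev x')
  exact abs_sub_le_iff.mpr ⟨by linarith [hx x'], by linarith [hx' x]⟩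

noncomputable def relImprovement (r : F → ℝ) (f₀ x f : F) : ℝ := (r f₀ - r f) / (r f₀ - r x)

lemma relImprovement_sub_le (hdev : ∀ f, |r' f - r f| ≤ ε) {x x' : F}
    (hx : ∀ f, r x ≤ r f) (hx' : ∀ f, r' x' ≤ r' f) {f₀ f : F} {c : ℝ} (hc : 0 < c)
    (hpos : 0 < r f₀ - r x) (hc' : c ≤ r' f₀ - r' x') (hf : 0 ≤ relImprovement r f₀ x f) :
    relImprovement r f₀ x f - 4 * ε / c ≤ relImprovement r' f₀ x' f := by
  have h := div_sub_two_mul_div_le_div hf (by linarith [hx f]) hpos (hc.trans_le hc')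
    (abs_sub_sub_sub_le_two_mul hdev f₀ f) (abs_sub_min_sub_sub_min_le_two_mul hdev hx hx' f₀)
  have hε : 0 ≤ 4 * ε := by linarith [(abs_nonneg _).trans (hdev f₀)]
  calc relImprovement r f₀ x f - 4 * ε / c
      ≤ relImprovement r f₀ x f - 2 * (2 * ε) / (r' f₀ - r' x') := by
        rw [← mul_assoc, show (2 : ℝ) * 2 = 4 by norm_num]
        gcongr
    _ ≤ relImprovement r' f₀ x' f := h

end Risk

lemma Finset.inf'_sub_le_inf' {ι α : Type*} [AddCommGroup α] [LinearOrder α]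
    [IsOrderedAddMonoid α] {s : Finset ι} (hs : s.Nonempty) {u v : ι → α} {c : α}
    (h : ∀ i ∈ s, u i - c ≤ v i) : s.inf' hs u - c ≤ s.inf' hs v :=
  le_inf' hs v fun i hi => (sub_le_sub_right (inf'_le u hi) c).trans (h i hi)

lemma Finset.le_apply_of_le_inf'_of_inf'_le_inf' {ι β α : Type*} [SemilatticeInf α]
    {s : Finset ι} (hs : s.Nonempty) {φ : ι → β → α} {x y : β} {c : α}
    (hy : ∀ i ∈ s, c ≤ φ i y) (hmax : s.inf' hs (φ · y) ≤ s.inf' hs (φ · x)) {i : ι}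
    (hi : i ∈ s) : c ≤ φ i x :=
  (le_inf' hs _ hy).trans (hmax.trans (inf'_le _ hi))

theorem empirical_maximin_rate_general
    {G : Type*} [Fintype G] [Nonempty G] {F : Type*}
    (R Rhat : G → F → ℝ) (f0 : F) (fstar fhatstar : G → F)
    (hopt : ∀ g f, R g (fstar g) ≤ R g f)
    (hhatopt : ∀ g f, Rhat g (fhatstar g) ≤ Rhat g f)
    (ρ ρhat : G → F → ℝ)
    (hρ : ∀ g f, ρ g f = (R g f0 - R g f) / (R g f0 - R g (fstar g)))
    (hρhat : ∀ g f,
      ρhat g f = (Rhat g f0 - Rhat g f) / (Rhat g f0 - Rhat g (fhatstar g)))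
    (fRI fhatRI : F)
    (hRI : ∀ f, Finset.univ.inf' Finset.univ_nonempty (fun g => ρ g f) ≤
        Finset.univ.inf' Finset.univ_nonempty (fun g => ρ g fRI))
    (hhatRI : ∀ f, Finset.univ.inf' Finset.univ_nonempty (fun g => ρhat g f) ≤
        Finset.univ.inf' Finset.univ_nonempty (fun g => ρhat g fhatRI))
    (Δ : ℝ)
    (hΔdef : Δ = Finset.univ.inf' Finset.univ_nonempty
      (fun g => R g f0 - R g (fstar g)))
    (hΔ : 0 < Δ)
    (ε : ℝ) (hεΔ : ε ≤ Δ / 8)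
    (hdev : ∀ g f, |Rhat g f - R g f| ≤ ε) :
    Finset.univ.inf' Finset.univ_nonempty (fun g => ρ g fRI) - 12 * ε / Δ ≤
      Finset.univ.inf' Finset.univ_nonempty (fun g => ρ g fhatRI) := by
  have hΔD g : Δ ≤ R g f0 - R g (fstar g) := hΔdef ▸ inf'_le _ (mem_univ g)
  have hΔDhat g : Δ / 2 ≤ Rhat g f0 - Rhat g (fhatstar g) := by
    linarith [hΔD g, (abs_le.mp (abs_sub_min_sub_sub_min_le_two_mul (hdev g) (hopt g)
      (hhatopt g) f0)).1]
  have hρRI g : 0 ≤ ρ g fRI := le_apply_of_le_inf'_of_inf'_le_inf' univ_nonempty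
    (fun g _ => by rw [hρ, sub_self, zero_div]) (hRI f0) (mem_univ g)
  have hρhatRI g : 0 ≤ ρhat g fhatRI := le_apply_of_le_inf'_of_inf'_le_inf' univ_nonempty
    (fun g _ => by rw [hρhat, sub_self, zero_div]) (hhatRI f0) (mem_univ g)
  have hρ_fRI g : ρ g fRI - 4 * ε / (Δ / 2) ≤ ρhat g fRI := by
    rw [hρ, hρhat]
    exact relImprovement_sub_le (hdev g) (hopt g) (hhatopt g) (by linarith) (by linarith [hΔD g])
      (hΔDhat g) ((hρRI g).trans_eq (hρ g fRI))
  have hρhat_fhatRI g : ρhat g fhatRI - 4 * ε / Δ ≤ ρ g fhatRI := by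
    rw [hρ, hρhat]
    exact relImprovement_sub_le (fun f => abs_sub_comm (R g f) _ ▸ hdev g f) (hhatopt g)
      (hopt g) hΔ (by linarith [hΔDhat g]) (hΔD g) ((hρhatRI g).trans_eq (hρhat g fhatRI))
  calc univ.inf' univ_nonempty (fun g => ρ g fRI) - 12 * ε / Δ
      = univ.inf' univ_nonempty (fun g => ρ g fRI) - 4 * ε / (Δ / 2) - 4 * ε / Δ := by
        field_simp; ring
    _ ≤ univ.inf' univ_nonempty (fun g => ρhat g fRI) - 4 * ε / Δ := by
      gcongr; exact inf'_sub_le_inf' _ fun g _ => hρ_fRI g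
    _ ≤ univ.inf' univ_nonempty (fun g => ρhat g fhatRI) - 4 * ε / Δ :=
      sub_le_sub_right (hhatRI fRI) _
    _ ≤ univ.inf' univ_nonempty (fun g => ρ g fhatRI) :=
      inf'_sub_le_inf' _ fun g _ => hρhat_fhatRI g

/-- Deterministic core of the convergence rate theorem. If empirical
risks are uniformly within ε ≤ Δ/8 of the population risks, then the empirical maximin
relative improvement solution is within 12ε/Δ of the population maximin value. -/
theorem empirical_maximin_rate
    {G : Type*} [Fintype G] [Nonempty G] {F : Type*}
    (R Rhat : G → F → ℝ) (f0 : F) (fstar fhatstar : G → F)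
    (hopt : ∀ g f, R g (fstar g) ≤ R g f)
    (hhatopt : ∀ g f, Rhat g (fhatstar g) ≤ Rhat g f)
    (ρ ρhat : G → F → ℝ)
    (hρ : ∀ g f, ρ g f = (R g f0 - R g f) / (R g f0 - R g (fstar g)))
    (hρhat : ∀ g f,
      ρhat g f = (Rhat g f0 - Rhat g f) / (Rhat g f0 - Rhat g (fhatstar g)))
    (fRI fhatRI : F)
    (hRI : ∀ f, Finset.univ.inf' Finset.univ_nonempty (fun g => ρ g f) ≤
        Finset.univ.inf' Finset.univ_nonempty (fun g => ρ g fRI))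
    (hhatRI : ∀ f, Finset.univ.inf' Finset.univ_nonempty (fun g => ρhat g f) ≤
        Finset.univ.inf' Finset.univ_nonempty (fun g => ρhat g fhatRI))
    (Δ : ℝ)
    (hΔdef : Δ = Finset.univ.inf' Finset.univ_nonempty
      (fun g => R g f0 - R g (fstar g)))
    (hΔ : 0 < Δ)
    (ε : ℝ) (hε0 : 0 ≤ ε) (hεΔ : ε ≤ Δ / 8)
    (hdev : ∀ g f, |Rhat g f - R g f| ≤ ε) :
    Finset.univ.inf' Finset.univ_nonempty (fun g => ρ g fRI) - 12 * ε / Δ ≤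
      Finset.univ.inf' Finset.univ_nonempty (fun g => ρ g fhatRI) :=
  empirical_maximin_rate_general R Rhat f0 fstar fhatstar hopt hhatopt ρ ρhat hρ hρhat fRI fhatRI
    hRI hhatRI Δ hΔdef hΔ ε hεΔ hdev
end
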